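/- Suppose ρ(A) > 0 and ρ(A) < (λ_m + λ_2)/(λ_m − λ_2), and let W = I_m − αL with α a real number satisfying α > 0 and λ_2^{-1}(1 − ρ(A)^{-1}) < α < λ_m^{-1}(1 + ρ(A)^{-1}). Then for every complex λ with |λ| ≥ 1, the geometric multiplicities agree: dim_ℂ Null(W ⊗ A − λ I_{mn}) = dim_ℂ Null(A − λ I_n). -/

import Mathlib

/-!
Diagonalise the Laplacian orthogonally, `L = U diag(e) Uᵀ`. Then `W ⊗ A - λI` is similar to
`diag(1 - α eᵢ) ⊗ A - λI`, whose null space is the product of the null spaces of the blocks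
`(1 - α eᵢ) A - λI`. The zero eigenvalue of `L` is simple and gives the block `A - λI`. Every other
eigenvalue lies in `[λ₂, λₘ]`, where the bounds on `α` give `|1 - α e| ρ(A) < 1 ≤ |λ|`; so
`λ / (1 - α e)` is too large to be an eigenvalue of `A`, and that block is injective.
-/

open Matrix Kronecker Polynomial Module LinearMap

namespace Matrix

variable {K : Type*} [Field K] {n ι : Type*} [Fintype n] [Fintype ι] [DecidableEq ι]

theorem finrank_ker_mulVecLin (M : Matrix n n K) :
    finrank K (ker M.mulVecLin) = Fintype.card n - M.rank := by
  have := M.mulVecLin.finrank_range_add_finrank_ker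
  rw [finrank_fintype_fun_eq_card] at this
  rw [Matrix.rank]
  omega

variable [DecidableEq n]

theorem finrank_ker_mulVecLin_conj {P Q : Matrix n n K} (hPQ : P * Q = 1) (M : Matrix n n K) :
    finrank K (ker (P * M * Q).mulVecLin) = finrank K (ker M.mulVecLin) := by
  have hdet : P.det * Q.det = 1 := by rw [← det_mul, hPQ, det_one]
  rw [finrank_ker_mulVecLin, finrank_ker_mulVecLin,
    rank_mul_eq_left_of_isUnit_det _ _ (.of_mul_eq_one_right _ hdet),
    rank_mul_eq_right_of_isUnit_det _ _ (.of_mul_eq_one _ hdet)]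

theorem finrank_ker_conj_sub_smul_one {P Q : Matrix n n K} (hPQ : P * Q = 1)
    (M : Matrix n n K) (c : K) :
    finrank K (ker (P * M * Q - c • 1).mulVecLin) = finrank K (ker (M - c • 1).mulVecLin) := by
  have : P * M * Q - c • 1 = P * (M - c • 1) * Q := by
    rw [mul_sub, sub_mul, mul_smul_comm, smul_mul_assoc, mul_one, hPQ]
  rw [this, finrank_ker_mulVecLin_conj hPQ]

theorem finrank_ker_map_conj_kronecker_sub_smul_one {R : Type*} [CommRing R] (f : R →+* K)
    {U V : Matrix ι ι R} (hUV : U * V = 1) (D : Matrix ι ι R) (A : Matrix n n R) (c : K) :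
    finrank K (ker (((U * D * V) ⊗ₖ A).map f - c • 1).mulVecLin) =
      finrank K (ker ((D ⊗ₖ A).map f - c • 1).mulVecLin) := by
  have hconj :
      ((U * D * V) ⊗ₖ A).map f = (U ⊗ₖ 1).map f * (D ⊗ₖ A).map f * (V ⊗ₖ 1).map f := by
    rw [← Matrix.map_mul, ← Matrix.map_mul, ← mul_kronecker_mul, ← mul_kronecker_mul, one_mul,
      mul_one]
  refine hconj ▸ finrank_ker_conj_sub_smul_one ?_ _ _
  rw [← Matrix.map_mul, ← mul_kronecker_mul, hUV, one_mul, one_kronecker_one,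
    Matrix.map_one _ f.map_zero f.map_one]

theorem diagonal_kronecker_sub_smul_one_mulVec_apply (d : ι → K) (B : Matrix n n K) (c : K)
    (x : ι × n → K) (i : ι) (j : n) :
    ((diagonal d ⊗ₖ B - c • 1) *ᵥ x) (i, j) = ((d i • B - c • 1) *ᵥ fun j' => x (i, j')) j := by
  simp only [sub_mulVec, smul_mulVec, one_mulVec, Pi.sub_apply, Pi.smul_apply]
  congr 1
  simp [mulVec, dotProduct, Fintype.sum_prod_type, diagonal_apply, Finset.mul_sum, mul_assoc]

theorem finrank_ker_diagonal_kronecker_sub_smul_one (d : ι → K) (B : Matrix n n K) (c : K) :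
    finrank K (ker (diagonal d ⊗ₖ B - c • 1).mulVecLin) =
      ∑ i, finrank K (ker (d i • B - c • 1).mulVecLin) := by
  have hmem (x : ι × n → K) : x ∈ ker (diagonal d ⊗ₖ B - c • 1).mulVecLin ↔
      ∀ i, (fun j => x (i, j)) ∈ ker (d i • B - c • 1).mulVecLin := by
    simp only [mem_ker, mulVecLin_apply, funext_iff, Prod.forall,
      diagonal_kronecker_sub_smul_one_mulVec_apply, Pi.zero_apply]
  let e : ker (diagonal d ⊗ₖ B - c • 1).mulVecLin ≃ₗ[K]
      ∀ i, ker (d i • B - c • 1).mulVecLin :=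
    { toFun := fun x i => ⟨fun j => x.1 (i, j), (hmem x.1).1 x.2 i⟩
      invFun := fun y => ⟨fun p => (y p.1).1 p.2, (hmem _).2 fun i => (y i).2⟩
      map_add' := fun _ _ => rfl
      map_smul' := fun _ _ => rfl
      left_inv := fun _ => rfl
      right_inv := fun _ => rfl }
  rw [e.finrank_eq, finrank_pi_fintype]

end Matrix

theorem Matrix.ker_smul_sub_smul_one_eq_bot {K n : Type*} [NormedField K] [Fintype n]
    [DecidableEq n] {A : Matrix n n K} {ρ : ℝ}
    (hρ : ∀ μ : K, (∃ v, v ≠ 0 ∧ A *ᵥ v = μ • v) → ‖μ‖ ≤ ρ) {t c : K} (h : ‖t‖ * ρ < ‖c‖) :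
    ker (t • A - c • 1).mulVecLin = ⊥ := by
  refine ker_eq_bot'.2 fun v hv => ?_
  by_contra hv0
  have htv : t • (A *ᵥ v) = c • v := by
    rwa [mulVecLin_apply, sub_mulVec, smul_mulVec, smul_mulVec, one_mulVec, sub_eq_zero] at hv
  by_cases ht : t = 0
  · have hc : c ≠ 0 := by rintro rfl; simp [ht] at h
    rw [ht, zero_smul, eq_comm, smul_eq_zero] at htv
    exact htv.elim hc hv0
  · have hμ := hρ (c / t) ⟨v, hv0, by rw [div_eq_inv_mul, mul_smul, ← htv, inv_smul_smul₀ ht]⟩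
    rw [norm_div, div_le_iff₀ (norm_pos_iff.2 ht)] at hμ
    linarith

theorem Matrix.IsHermitian.map_eigenvalues_eq_of_charpoly_eq {𝕜 : Type*} [RCLike 𝕜] {n : Type*}
    [Fintype n] [DecidableEq n] {A : Matrix n n 𝕜} (hA : A.IsHermitian) {f : n → ℝ}
    (hf : A.charpoly = ∏ i, (X - C (f i : 𝕜))) :
    Finset.univ.val.map hA.eigenvalues = Finset.univ.val.map f := by
  have := hA.roots_charpoly_eq_eigenvalues
  rw [hf, roots_prod _ _ (Finset.prod_ne_zero_iff.2 fun i _ => X_sub_C_ne_zero _)] at this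
  apply Multiset.map_injective (RCLike.ofReal_injective (K := 𝕜))
  simpa [Multiset.map_map, Function.comp_def] using this.symm

theorem abs_one_sub_mul_mul_lt_one {a b t α ρ : ℝ} (ha : 0 < a) (hα : 0 ≤ α) (hρ : 0 < ρ)
    (hlo : a⁻¹ * (1 - ρ⁻¹) < α) (hhi : α < b⁻¹ * (1 + ρ⁻¹)) (hat : a ≤ t) (htb : t ≤ b) :
    |1 - α * t| * ρ < 1 := by
  have hb : 0 < b := ha.trans_le (hat.trans htb)
  have hlo' : 1 - ρ⁻¹ < α * a := by rwa [inv_mul_lt_iff₀ ha, mul_comm] at hlo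
  have hhi' : α * b < 1 + ρ⁻¹ := by rwa [lt_inv_mul_iff₀ hb, mul_comm] at hhi
  have hab : |1 - α * t| < ρ⁻¹ := abs_lt.2 ⟨by nlinarith, by nlinarith⟩
  calc |1 - α * t| * ρ < ρ⁻¹ * ρ := by gcongr
    _ = 1 := inv_mul_cancel₀ hρ.ne'

theorem Fintype.sum_comp_eq_of_map_univ_eq {ι α M : Type*} [Fintype ι] [AddCommMonoid M]
    {e f : ι → α} (h : Finset.univ.val.map e = Finset.univ.val.map f) (g : α → M) :
    ∑ i, g (e i) = ∑ i, g (f i) := by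
  simpa only [Multiset.map_map, Function.comp_def, Finset.sum_map_val] using
    congrArg (fun s => (s.map g).sum) h

theorem stmt7 (m n : ℕ) (hm : 2 < m)
    (G : SimpleGraph (Fin m)) [DecidableRel G.Adj]
    (L : Matrix (Fin m) (Fin m) ℝ) (hL : L = G.lapMatrix ℝ)
    (eig : Fin m → ℝ) (heig_mono : Monotone eig)
    (hchar : L.charpoly = ∏ i, (X - C (eig i)))
    (heig0 : eig ⟨0, by omega⟩ = 0) (heig1 : 0 < eig ⟨1, by omega⟩)
    (A : Matrix (Fin n) (Fin n) ℝ)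
    -- ρA is the spectral radius of A
    (ρA : ℝ) (hρ_pos : 0 < ρA)
    (hρ_ub : ∀ μ : ℂ, (∃ v : Fin n → ℂ, v ≠ 0 ∧
        (A.map Complex.ofReal).mulVec v = μ • v) → ‖μ‖ ≤ ρA)
    (α : ℝ) (hα_pos : 0 < α)
    (hα_lo : (eig ⟨1, by omega⟩)⁻¹ * (1 - ρA⁻¹) < α)
    (hα_hi : α < (eig ⟨m - 1, by omega⟩)⁻¹ * (1 + ρA⁻¹))
    (W : Matrix (Fin m) (Fin m) ℝ) (hW : W = 1 - α • L) :
    ∀ lam : ℂ, 1 ≤ ‖lam‖ →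
      Module.finrank ℂ
        (LinearMap.ker (Matrix.mulVecLin
          (((W ⊗ₖ A).map Complex.ofReal) -
            lam • (1 : Matrix (Fin m × Fin n) (Fin m × Fin n) ℂ)))) =
      Module.finrank ℂ
        (LinearMap.ker (Matrix.mulVecLin
          ((A.map Complex.ofReal) - lam • (1 : Matrix (Fin n) (Fin n) ℂ)))) := by
  intro lam hlam
  have hLh : L.IsHermitian := hL ▸ (G.posSemidef_lapMatrix ℝ).isHermitian
  set U : Matrix (Fin m) (Fin m) ℝ := (hLh.eigenvectorUnitary : Matrix (Fin m) (Fin m) ℝ)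
  have hUU : U * star U = 1 := mem_unitaryGroup_iff.1 hLh.eigenvectorUnitary.2
  set d : Fin m → ℝ := fun i => 1 - α * hLh.eigenvalues i
  have hWU : W = U * diagonal d * star U := by
    have hLU : L = U * diagonal hLh.eigenvalues * star U := by
      simpa [RCLike.ofReal_real_eq_id] using hLh.spectral_theorem
    have hd : diagonal d = 1 - α • diagonal hLh.eigenvalues := by
      ext i j
      by_cases h : i = j <;> simp [d, h]
    rw [hW, hLU, hd, mul_sub, sub_mul, mul_one, hUU, mul_smul_comm, smul_mul_assoc]
  have hdiag : (diagonal d ⊗ₖ A).map Complex.ofReal =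
      diagonal (fun i => (d i : ℂ)) ⊗ₖ A.map Complex.ofReal := by
    ext ⟨i, j⟩ ⟨i', j'⟩
    by_cases h : i = i' <;> simp [h]
  let nullity (t : ℝ) : ℕ := finrank ℂ (ker ((t : ℂ) • A.map Complex.ofReal - lam • 1).mulVecLin)
  have hblock (j : Fin m) (hj : j ≠ ⟨0, by omega⟩) : nullity (1 - α * eig j) = 0 := by
    refine Submodule.finrank_eq_zero.2 (ker_smul_sub_smul_one_eq_bot hρ_ub (lt_of_lt_of_le ?_ hlam))
    rw [Complex.norm_real, Real.norm_eq_abs]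
    refine abs_one_sub_mul_mul_lt_one heig1 hα_pos.le hρ_pos hα_lo hα_hi
      (heig_mono ?_) (heig_mono ?_)
    · exact Nat.one_le_iff_ne_zero.2 fun h => hj (Fin.ext h)
    · exact Nat.le_sub_one_of_lt j.isLt
  calc _ = finrank ℂ (ker ((diagonal d ⊗ₖ A).map Complex.ofReal - lam • 1).mulVecLin) := by
        rw [hWU]
        exact finrank_ker_map_conj_kronecker_sub_smul_one Complex.ofRealHom hUU (diagonal d) A lam
    _ = ∑ i, nullity (d i) := by rw [hdiag, finrank_ker_diagonal_kronecker_sub_smul_one]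
    _ = ∑ j, nullity (1 - α * eig j) :=
        Fintype.sum_comp_eq_of_map_univ_eq (hLh.map_eigenvalues_eq_of_charpoly_eq hchar)
          fun t => nullity (1 - α * t)
    _ = nullity 1 := by
        rw [Finset.sum_eq_single ⟨0, by omega⟩ (fun j _ hj => hblock j hj) (by simp), heig0,
          mul_zero, sub_zero]
    _ = _ := by unfold nullity; rw [Complex.ofReal_one, one_smul]
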